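/- Let X be a finite nonempty set and let π₁, π₂, π₃ be partitions of X that are pairwise complementary. Then each partition πᵢ is square: the number of parts of πᵢ equals the common cardinality of its parts; moreover, writing d for this common number, |X| = d². (A classical structure in Rel whose partition is not square cannot belong to a family of three or more mutually complementary classical structures.) -/

import Mathlib

/-- `π` is a partition of `X`: a collection of nonempty pairwise disjoint subsets of `X`
whose union is all of `X`. -/
def IsPartition {X : Type*} (π : Set (Set X)) : Prop :=
  (∀ S ∈ π, S.Nonempty) ∧ (∀ S ∈ π, ∀ T ∈ π, S ≠ T → Disjoint S T) ∧ ⋃₀ π = Set.univ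

/-- Two partitions are complementary if every part of one meets every part of the other
in exactly one element. -/
def Complementary {X : Type*} (π τ : Set (Set X)) : Prop :=
  ∀ S ∈ π, ∀ T ∈ τ, ∃! x, x ∈ S ∩ T

/-!
Counting the points of a part `S` of `π` through the parts of a complementary partition `τ`
that contain them gives `|S| = |τ|`, and sending `x` to the pair of parts containing it gives
`|X| = |π| |τ|`. For three mutually complementary partitions, a part of `π₁` shows
`|π₂| = |π₃|` and a part of `π₂` shows `|π₁| = |π₃|`; so all three have `d` parts of size `d`,
and `|X| = d²`.
-/

section

variable {X : Type*} {π τ : Set (Set X)}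

namespace IsPartition

theorem exists_mem (h : IsPartition π) (x : X) : ∃ S ∈ π, x ∈ S :=
  Set.sUnion_eq_univ_iff.1 h.2.2 x

theorem eq_of_mem_of_mem (h : IsPartition π) {S T : Set X} {x : X} (hS : S ∈ π) (hT : T ∈ π)
    (hxS : x ∈ S) (hxT : x ∈ T) : S = T := by
  by_contra hne
  exact Set.disjoint_left.1 (h.2.1 S hS T hT hne) hxS hxT

end IsPartition

namespace Complementary

theorem symm (c : Complementary π τ) : Complementary τ π := fun T hT S hS =>
  (c S hS T hT).imp fun _ ⟨hx, hu⟩ => ⟨hx.symm, fun y hy => hu y hy.symm⟩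

theorem ncard_eq_ncard_of_mem (c : Complementary π τ) (hτ : IsPartition τ) {S : Set X} (hS : S ∈ π) :
    S.ncard = τ.ncard := by
  let f : τ → S := fun T => ⟨(c S hS T T.2).exists.choose, (c S hS T T.2).exists.choose_spec.1⟩
  have hf_mem (T : τ) : (f T : X) ∈ (T : Set X) := (c S hS T T.2).exists.choose_spec.2
  have hf : Function.Bijective f := by
    constructor
    · intro T T' hTT'
      have hT' := hf_mem T'
      rw [← hTT'] at hT'
      exact Subtype.ext (hτ.eq_of_mem_of_mem T.2 T'.2 (hf_mem T) hT')
    · rintro ⟨x, hx⟩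
      obtain ⟨T, hT, hxT⟩ := hτ.exists_mem x
      exact ⟨⟨T, hT⟩, Subtype.ext ((c S hS T hT).unique
        (c S hS T hT).exists.choose_spec ⟨hx, hxT⟩)⟩
  simpa only [Nat.card_coe_set_eq] using (Nat.card_eq_of_bijective f hf).symm

theorem card_eq_ncard_mul_ncard (c : Complementary π τ) (hπ : IsPartition π)
    (hτ : IsPartition τ) : Nat.card X = π.ncard * τ.ncard := by
  let f : π × τ → X := fun p => (c p.1 p.1.2 p.2 p.2.2).exists.choose
  have hf_mem (p : π × τ) : f p ∈ (p.1 : Set X) ∩ p.2 :=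
    (c p.1 p.1.2 p.2 p.2.2).exists.choose_spec
  have hf : Function.Bijective f := by
    constructor
    · rintro ⟨S, T⟩ ⟨S', T'⟩ hST
      have hS := (hf_mem (S, T)).1
      have hT := (hf_mem (S, T)).2
      have hS' := (hf_mem (S', T')).1
      have hT' := (hf_mem (S', T')).2
      rw [← hST] at hS' hT'
      exact Prod.ext (Subtype.ext (hπ.eq_of_mem_of_mem S.2 S'.2 hS hS'))
        (Subtype.ext (hτ.eq_of_mem_of_mem T.2 T'.2 hT hT'))
    · intro x
      obtain ⟨S, hS, hxS⟩ := hπ.exists_mem x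
      obtain ⟨T, hT, hxT⟩ := hτ.exists_mem x
      exact ⟨(⟨S, hS⟩, ⟨T, hT⟩), (c S hS T hT).unique (hf_mem (⟨S, hS⟩, ⟨T, hT⟩)) ⟨hxS, hxT⟩⟩
  rw [← Nat.card_eq_of_bijective f hf, Nat.card_prod, Nat.card_coe_set_eq,
    Nat.card_coe_set_eq]

end Complementary

end

/-- If `π₁, π₂, π₃` are pairwise complementary partitions of a finite nonempty set `X`,
then each `πᵢ` is square (its number of parts equals the common cardinality `d` of its
parts) and `|X| = d²`.  Hence a classical structure in `Rel` whose partition is not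
square cannot belong to a family of three or more mutually complementary classical
structures. -/
theorem three_mutually_complementary_partitions_square {X : Type*} [Fintype X] [Nonempty X]
    (π₁ π₂ π₃ : Set (Set X))
    (h₁ : IsPartition π₁) (h₂ : IsPartition π₂) (h₃ : IsPartition π₃)
    (c₁₂ : Complementary π₁ π₂) (c₁₃ : Complementary π₁ π₃) (c₂₃ : Complementary π₂ π₃) :
    ∃ d : ℕ, Fintype.card X = d ^ 2 ∧
      ∀ π ∈ ({π₁, π₂, π₃} : Set (Set (Set X))),
        π.ncard = d ∧ ∀ S ∈ π, S.ncard = d := by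
  obtain ⟨x₀⟩ := ‹Nonempty X›
  obtain ⟨S₁, hS₁, -⟩ := h₁.exists_mem x₀
  obtain ⟨S₂, hS₂, -⟩ := h₂.exists_mem x₀
  have e₁₃ : π₁.ncard = π₃.ncard :=
    (c₁₂.symm.ncard_eq_ncard_of_mem h₁ hS₂).symm.trans (c₂₃.ncard_eq_ncard_of_mem h₃ hS₂)
  have e₂₃ : π₂.ncard = π₃.ncard :=
    (c₁₂.ncard_eq_ncard_of_mem h₂ hS₁).symm.trans (c₁₃.ncard_eq_ncard_of_mem h₃ hS₁)
  refine ⟨π₃.ncard, ?_, ?_⟩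
  · rw [← Nat.card_eq_fintype_card, c₁₂.card_eq_ncard_mul_ncard h₁ h₂, e₁₃, e₂₃, sq]
  · rintro π (rfl | rfl | rfl)
    · exact ⟨e₁₃, fun S hS => (c₁₂.ncard_eq_ncard_of_mem h₂ hS).trans e₂₃⟩
    · exact ⟨e₂₃, fun S hS => c₂₃.ncard_eq_ncard_of_mem h₃ hS⟩
    · exact ⟨rfl, fun S hS => (c₁₃.symm.ncard_eq_ncard_of_mem h₁ hS).trans e₁₃⟩
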